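/- arXiv:2309.05796 — 2 statements merged into one kernel-verified Lean document; each statement's English description precedes it below -/
import Mathlib

section
/- Let G be a finite group acting by automorphisms on a finite p-group P for a prime p. Suppose that G is generated by its p-elements' complements, more precisely suppose O^p(G) = G (G has no nontrivial p-group quotient, i.e., G is generated by its elements of order coprime to p in the sense that the smallest normal subgroup with p-group quotient is G itself). If the induced action of G on the Frattini quotient P/Φ(P) is trivial, then G acts trivially on P. -/
section Aux

variable {P : Type} [Group P] [Fintype P]

/-- The subgroup of `MulAut P` consisting of automorphisms acting trivially on the
Frattini quotient. -/
def frattiniStab (P : Type) [Group P] : Subgroup (MulAut P) where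
  carrier := {σ | ∀ x, σ x * x⁻¹ ∈ frattini P}
  one_mem' := by
    intro x
    simpa using (frattini P).one_mem
  mul_mem' := by
    intro a b ha hb x
    have h := (frattini P).mul_mem (ha (b x)) (hb x)
    have : a (b x) * (b x)⁻¹ * (b x * x⁻¹) = (a * b) x * x⁻¹ := by
      simp [mul_assoc]
    rwa [this] at h
  inv_mem' := by
    intro a ha x
    have h := (frattini P).inv_mem (ha (a⁻¹ x))
    have : (a (a⁻¹ x) * (a⁻¹ x)⁻¹)⁻¹ = a⁻¹ x * x⁻¹ := by
      simp
    rwa [this] at h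

lemma aux_pow {p : ℕ} (hp : p.Prime) :
    ∀ n, n ≠ 0 → (∀ q, q.Prime → q ∣ n → q = p) → ∃ k, n = p ^ k := by
  intro n
  induction n using Nat.strong_induction_on with
  | _ n ih =>
    intro hn hq
    rcases eq_or_ne n 1 with rfl | h1
    · exact ⟨0, rfl⟩
    · obtain ⟨q, hq', hdvd⟩ := Nat.exists_prime_and_dvd h1
      obtain rfl : q = p := hq q hq' hdvd
      obtain ⟨m, rfl⟩ := hdvd
      have hm : m ≠ 0 := by rintro rfl; simp at hn
      have hlt : m < q * m := by
        have := hq'.two_le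
        calc m = 1 * m := (one_mul m).symm
        _ < q * m := (Nat.mul_lt_mul_right (Nat.pos_of_ne_zero hm)).mpr (by omega)
      obtain ⟨k, rfl⟩ := ih m hlt hm (fun r hr hrd => hq r hr (hrd.mul_left q))
      exact ⟨k + 1, (pow_succ' q k).symm⟩

/-- An automorphism of prime order `q ≠ p` acting trivially on the Frattini quotient
of a finite `p`-group is impossible. -/
lemma no_prime_order {p : ℕ} (hp : p.Prime) (hP : IsPGroup p P)
    {q : ℕ} (hq : q.Prime) (hqp : q ≠ p) (σ : MulAut P)
    (hσS : σ ∈ frattiniStab P) (hord : orderOf σ = q) : False := by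
  classical
  haveI : Fact q.Prime := ⟨hq⟩
  -- the set of tuples congruent to the identity tuple mod Frattini
  let Ω := {f : P → P // ∀ i, f i * i⁻¹ ∈ frattini P}
  -- the Frattini stabilizer acts on Ω
  letI : SMul (frattiniStab P) Ω :=
    ⟨fun τ f => ⟨fun i => τ.1 (f.1 i), by
      intro i
      have h := (frattini P).mul_mem (τ.2 (f.1 i)) (f.2 i)
      have : τ.1 (f.1 i) * (f.1 i)⁻¹ * (f.1 i * i⁻¹) = τ.1 (f.1 i) * i⁻¹ := by
        simp [mul_assoc]
      rwa [this] at h⟩⟩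
  letI : MulAction (frattiniStab P) Ω :=
    { one_smul := fun f => by
        apply Subtype.ext; funext i; rfl
      mul_smul := fun a b f => by
        apply Subtype.ext; funext i; rfl }
  set σ' : frattiniStab P := ⟨σ, hσS⟩ with hσ'
  letI H : Subgroup (frattiniStab P) := Subgroup.zpowers σ'
  have hordσ' : orderOf σ' = q := by
    rw [← hord]
    exact (orderOf_injective (frattiniStab P).subtype Subtype.coe_injective σ').symm
  have hHq : IsPGroup q H := by
    apply IsPGroup.of_card
    rw [Nat.card_zpowers, hordσ']
    exact (pow_one q).symm
  -- card Ω is a power of p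
  have hΩcard : ∃ k, Nat.card Ω = p ^ k := by
    have e : Ω ≃ (P → frattini P) :=
      { toFun := fun f => fun i => ⟨f.1 i * i⁻¹, f.2 i⟩
        invFun := fun g => ⟨fun i => (g i : P) * i, by intro i; simp⟩
        left_inv := fun f => by apply Subtype.ext; funext i; simp
        right_inv := fun g => by funext i; apply Subtype.ext; simp }
    haveI : Fact p.Prime := ⟨hp⟩
    obtain ⟨k, hk⟩ := (hP.to_subgroup (frattini P)).exists_card_eq
    refine ⟨k * Fintype.card P, ?_⟩
    rw [Nat.card_congr e, Nat.card_fun, hk, Nat.card_eq_fintype_card, ← pow_mul]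
  -- so q does not divide card Ω, giving a fixed point
  obtain ⟨k, hk⟩ := hΩcard
  have hqd : ¬ q ∣ Nat.card Ω := by
    rw [hk]
    intro hdvd
    exact hqp ((Nat.prime_dvd_prime_iff_eq hq hp).mp (hq.dvd_of_dvd_pow hdvd))
  obtain ⟨f, hf⟩ := hHq.nonempty_fixed_point_of_prime_not_dvd_card Ω hqd
  have hfix : ∀ i, σ (f.1 i) = f.1 i := by
    intro i
    have h := hf ⟨σ', Subgroup.mem_zpowers σ'⟩
    have := congrFun (congrArg Subtype.val h) i
    exact this
  -- f generates P
  have hgen : Subgroup.closure (Set.range f.1) = ⊤ := by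
    apply frattini_nongenerating
    rw [eq_top_iff]
    intro i _
    have h1 : f.1 i ∈ Subgroup.closure (Set.range f.1) ⊔ frattini P :=
      Subgroup.mem_sup_left (Subgroup.subset_closure ⟨i, rfl⟩)
    have h2 : f.1 i * i⁻¹ ∈ Subgroup.closure (Set.range f.1) ⊔ frattini P :=
      Subgroup.mem_sup_right (f.2 i)
    have : (f.1 i * i⁻¹)⁻¹ * f.1 i = i := by group
    rw [← this]
    exact Subgroup.mul_mem _ (Subgroup.inv_mem _ h2) h1
  -- so σ is the identity
  have hσ1 : σ = 1 := by
    have hle : Subgroup.closure (Set.range f.1) ≤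
        σ.toMonoidHom.eqLocus (MonoidHom.id P) := by
      apply Subgroup.closure_le _ |>.mpr
      rintro x ⟨i, rfl⟩
      exact hfix i
    rw [hgen] at hle
    ext x
    exact hle (Subgroup.mem_top x)
  rw [hσ1, orderOf_one] at hord
  exact hq.one_lt.ne' hord.symm

/-- The Frattini stabilizer of a finite `p`-group is a `p`-group. -/
lemma frattiniStab_isPGroup {p : ℕ} (hp : p.Prime) (hP : IsPGroup p P) :
    IsPGroup p (frattiniStab P) := by
  intro σ
  have hne : orderOf σ ≠ 0 := by
    have : Finite (frattiniStab P) := inferInstance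
    exact (orderOf_pos σ).ne'
  have hq : ∀ q, q.Prime → q ∣ orderOf σ → q = p := by
    intro q hq hdvd
    by_contra hqp
    -- get an element of order q
    set τ := σ ^ (orderOf σ / q) with hτ
    have hordτ : orderOf τ = q := by
      rw [hτ, orderOf_pow]
      have h1 : Nat.gcd (orderOf σ) (orderOf σ / q) = orderOf σ / q :=
        Nat.gcd_eq_right (Nat.div_dvd_of_dvd hdvd)
      rw [h1, Nat.div_div_self hdvd hne]
    have hordτ' : orderOf (τ : MulAut P) = q := by
      rw [← hordτ]
      exact (orderOf_injective (frattiniStab P).subtype Subtype.coe_injective τ).symm ▸ rfl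
    exact no_prime_order hp hP hq hqp (τ : MulAut P) τ.2 hordτ'
  obtain ⟨k, hk⟩ := aux_pow hp (orderOf σ) hne hq
  exact ⟨k, by rw [← hk]; exact pow_orderOf_eq_one σ⟩

end Aux

/-- If a finite group `G` with `O^p(G) = G` acts by automorphisms on a finite `p`-group `P`
and the induced action on the Frattini quotient `P/Φ(P)` is trivial, then `G` acts
trivially on `P`. -/
theorem stmt0 (G : Type) [Group G] [Fintype G] (p : ℕ) (hp : p.Prime)
    (P : Type) [Group P] [Fintype P] (hP : IsPGroup p P)
    [MulDistribMulAction G P]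
    (hOp : ∀ (N : Subgroup G) [N.Normal], IsPGroup p (G ⧸ N) → N = ⊤)
    (htriv : ∀ (g : G) (x : P), (g • x) * x⁻¹ ∈ frattini P) :
    ∀ (g : G) (x : P), g • x = x := by
  set φ := MulDistribMulAction.toMulAut G P with hφ
  have hmem : ∀ g : G, φ g ∈ frattiniStab P := by
    intro g x
    exact htriv g x
  have hker : φ.ker = ⊤ := by
    apply hOp
    intro q
    obtain ⟨g, rfl⟩ := QuotientGroup.mk_surjective q
    obtain ⟨n, hn⟩ := frattiniStab_isPGroup hp hP ⟨φ g, hmem g⟩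
    refine ⟨n, ?_⟩
    rw [← QuotientGroup.mk_pow, QuotientGroup.eq_one_iff]
    have : φ (g ^ p ^ n) = 1 := by
      rw [map_pow]
      exact congrArg Subtype.val hn
    exact this
  intro g x
  have hg : φ g = 1 := by
    have : g ∈ φ.ker := hker ▸ Subgroup.mem_top g
    exact this
  have := congrArg (fun σ : MulAut P => σ x) hg
  simpa [hφ] using this
end

section
/- Let G be a finite group, M ⊴ G, and suppose M is a p-group for a prime p, M ≤ Z(K) for some subgroup M ≤ K ⊴ G, and suppose that for every subgroup M < K̃ ⊴ K with K̃/M simple, the subgroup M has a normal complement in K̃ (K̃ = M × C for some C ⊴ K̃). If K/M is a direct product of non-abelian simple groups, then M has a normal complement C in K with C = O^p(K); in particular K = M × O^p(K) and O^p(K) is normal in G. -/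
/-!
Let `C i` be a complement of `M` in the preimage of the simple factor `S i` of `K/M`, so that
`C i ≅ S i` is perfect. For `i ≠ j` the images of `C i` and `C j` commute, so `⁅C i, C j⁆ ≤ M` is
central, and the three subgroups lemma together with `C i = ⁅C i, C i⁆` gives `⁅C i, C j⁆ = 1`.
Hence multiplication `∏ C i → K` is a homomorphism whose composite with `K → K/M` is the
isomorphism `∏ C i ≅ ∏ S i ≅ K/M`, so its image `D` is a perfect complement of `M` in `K`. As
`K = M D` with `M` central, `⁅K, K⁆ = D`, so `D` is normal in `G`; `K/D ≅ M` is a `p`-group, and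
the perfect group `D` lies in every normal subgroup of `K` with `p`-group quotient because
`p`-groups are solvable.
-/

open Subgroup QuotientGroup
open Group (IsPerfect)

namespace Group

theorem isPerfect_of_isSimpleGroup {S : Type*} [Group S] [IsSimpleGroup S]
    (h : ∃ a b : S, a * b ≠ b * a) : IsPerfect S := by
  refine ⟨(commutator_normal (⊤ : Subgroup S) ⊤).eq_bot_or_eq_top.resolve_left fun hbot => ?_⟩
  obtain ⟨a, b, hab⟩ := h
  have := commutator_mem_commutator (mem_top a) (mem_top b)
  rw [hbot, mem_bot, commutatorElement_eq_one_iff_mul_comm] at this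
  exact hab this

end Group

namespace Subgroup

variable {G : Type*} [Group G]

theorem isPerfect_iSup {ι : Type*} (H : ι → Subgroup G) [∀ i, IsPerfect (H i)] :
    IsPerfect (⨆ i, H i : Subgroup G) :=
  isPerfect_iff.mpr <| le_antisymm (commutator_le_self _) <| iSup_le fun i =>
    (commutator_eq_self (H := H i)) ▸ commutator_mono (le_iSup H i) (le_iSup H i)

theorem eq_bot_of_isPerfect_of_isSolvable [Group.IsSolvable G] (H : Subgroup G)
    [IsPerfect H] : H = ⊥ := by
  by_contra hne
  have : Nontrivial H := (nontrivial_iff_ne_bot H).mpr hne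
  exact IsPerfect.not_isSolvable H inferInstance

theorem le_of_isPerfect_of_isPGroup_quotient {p : ℕ} [Fact p.Prime] {N : Subgroup G}
    [N.Normal] [Finite (G ⧸ N)] (hN : IsPGroup p (G ⧸ N)) (H : Subgroup G) [IsPerfect H] :
    H ≤ N := by
  have := hN.isNilpotent
  have := IsPerfect.map (mk' N) (H := H)
  rw [← ker_mk' N, ← map_eq_bot_iff]
  exact eq_bot_of_isPerfect_of_isSolvable _

theorem commutator_eq_bot_of_le_center {A B : Subgroup G} [IsPerfect A]
    (h : ⁅A, B⁆ ≤ center G) : ⁅A, B⁆ = ⊥ := by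
  have h₁ : ⁅⁅A, B⁆, A⁆ = ⊥ :=
    commutator_eq_bot_iff_le_centralizer.mpr (h.trans (center_le_centralizer (A : Set G)))
  have h₂ : ⁅⁅B, A⁆, A⁆ = ⊥ := by rwa [commutator_comm B]
  simpa only [commutator_eq_self] using commutator_commutator_eq_bot_of_rotate h₁ h₂

theorem commutator_eq_of_sup_eq_top {M D : Subgroup G} (hM : M ≤ center G) (hMD : M ⊔ D = ⊤)
    [IsPerfect D] : _root_.commutator G = D := by
  have hMcomm : IsMulCommutative M :=
    le_centralizer_iff_isMulCommutative.mp (hM.trans (center_le_centralizer (M : Set G)))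
  have hDnormal : D.Normal := by
    rw [← normalizer_eq_top_iff, eq_top_iff, ← hMD]
    exact sup_le (hM.trans ((center_le_centralizer (D : Set G)).trans
      (centralizer_le_normalizer _))) le_normalizer
  refine le_antisymm
    (Normal.commutator_le_of_self_sup_commutative_eq_top (sup_comm M D ▸ hMD) hMcomm) ?_
  exact commutator_eq_self (H := D) ▸ commutator_mono le_top le_top

theorem isComplement'_ker_range {K Q P : Type*} [Group K] [Group Q] [Group P] (π : K →* Q)
    (Φ : P →* K) (h : Function.Bijective (π.comp Φ)) : IsComplement' π.ker Φ.range := by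
  refine isComplement'_of_disjoint_and_mul_eq_univ ?_ (Set.eq_univ_of_forall fun g => ?_)
  · rw [disjoint_def]
    rintro _ hx ⟨f, rfl⟩
    rw [h.1 (hx.trans (map_one _).symm), map_one]
  · obtain ⟨f, hf⟩ := h.2 (π g)
    exact ⟨g * (Φ f)⁻¹, by simp [← hf], Φ f, ⟨f, rfl⟩, inv_mul_cancel_right g _⟩

theorem normal_of_piMulEquiv {Q ι : Type*} [Group Q] [DecidableEq ι] {S : ι → Subgroup Q}
    (e : ((i : ι) → S i) ≃* Q) (he : ∀ i (x : S i), e (Pi.mulSingle i x) = x) (i : ι) :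
    (S i).Normal := by
  refine ⟨fun s hs q => ?_⟩
  obtain ⟨f, rfl⟩ := e.surjective q
  have hconj : f * Pi.mulSingle i ⟨s, hs⟩ * f⁻¹ = Pi.mulSingle i (f i * ⟨s, hs⟩ * (f i)⁻¹) := by
    ext j : 1
    by_cases hj : j = i
    · subst hj; simp
    · simp [Pi.mulSingle_eq_of_ne hj]
  rw [show s = e (Pi.mulSingle i ⟨s, hs⟩) from (he i ⟨s, hs⟩).symm, ← map_inv, ← map_mul,
    ← map_mul, hconj, he]
  exact SetLike.coe_mem _

theorem commute_of_piMulEquiv {Q ι : Type*} [Group Q] [DecidableEq ι] {S : ι → Subgroup Q}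
    (e : ((i : ι) → S i) ≃* Q) (he : ∀ i (x : S i), e (Pi.mulSingle i x) = x) {i j : ι}
    (hij : i ≠ j) {a b : Q} (ha : a ∈ S i) (hb : b ∈ S j) : Commute a b := by
  rw [show a = e (Pi.mulSingle i ⟨a, ha⟩) from (he i ⟨a, ha⟩).symm,
    show b = e (Pi.mulSingle j ⟨b, hb⟩) from (he j ⟨b, hb⟩).symm]
  exact (Pi.mulSingle_commute hij _ _).map e

theorem exists_mulEquiv_of_inf_eq_bot {K : Type*} [Group K] {N C : Subgroup K} [N.Normal]
    {T : Subgroup (K ⧸ N)} (hinf : N ⊓ C = ⊥) (hsup : N ⊔ C = T.comap (mk' N)) :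
    ∃ θ : C ≃* T, ∀ x, (θ x : K ⧸ N) = x := by
  have hmem : ∀ x : C, mk' N x ∈ T := fun x => by
    have := mem_sup_right (S := N) x.2
    rwa [hsup] at this
  let θ := ((mk' N).comp C.subtype).codRestrict T hmem
  have hinj : Function.Injective θ := by
    rw [injective_iff_map_eq_one]
    intro x hx
    have hxN : (x : K) ∈ N := (QuotientGroup.eq_one_iff _).mp (congrArg Subtype.val hx)
    have : (x : K) ∈ N ⊓ C := ⟨hxN, x.2⟩
    rw [hinf, mem_bot] at this
    exact Subtype.ext this
  have hsurj : Function.Surjective θ := by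
    rintro ⟨t, ht⟩
    obtain ⟨g, rfl⟩ := mk'_surjective N t
    have hg : g ∈ N ⊔ C := hsup ▸ ht
    obtain ⟨n, hn, c, hc, rfl⟩ := mem_sup_of_normal_left.mp hg
    refine ⟨⟨c, hc⟩, Subtype.ext ?_⟩
    change (c : K ⧸ N) = ((n * c : K) : K ⧸ N)
    rw [QuotientGroup.mk_mul, (QuotientGroup.eq_one_iff n).mpr hn, one_mul]
  exact ⟨MulEquiv.ofBijective θ ⟨hinj, hsurj⟩, fun _ => rfl⟩

theorem exists_isComplement'_isPerfect_of_piMulEquiv {K ι : Type*} [Group K] [Fintype ι]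
    [DecidableEq ι] {M : Subgroup K} [M.Normal] (hM : M ≤ center K)
    {S : ι → Subgroup (K ⧸ M)} [∀ i, IsPerfect (S i)] (e : ((i : ι) → S i) ≃* K ⧸ M)
    (he : ∀ i (x : S i), e (Pi.mulSingle i x) = x) (C : ι → Subgroup K)
    (hinf : ∀ i, M ⊓ C i = ⊥) (hsup : ∀ i, M ⊔ C i = (S i).comap (mk' M)) :
    ∃ D : Subgroup K, IsComplement' M D ∧ IsPerfect D := by
  choose θ hθ using fun i => exists_mulEquiv_of_inf_eq_bot (hinf i) (hsup i)
  have hperf : ∀ i, IsPerfect (C i) := fun i =>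
    IsPerfect.ofSurjective (f := (θ i).symm.toMonoidHom) (θ i).symm.surjective
  have hCS : ∀ i, C i ≤ (S i).comap (mk' M) := fun i => hsup i ▸ le_sup_right
  have hcomm : Pairwise fun i j => ∀ x y, x ∈ C i → y ∈ C j → Commute x y := by
    intro i j hij
    have hle : ⁅C i, C j⁆ ≤ M := commutator_le.mpr fun x hx y hy => by
      rw [← ker_mk' M, MonoidHom.mem_ker, map_commutatorElement,
        commutatorElement_eq_one_iff_commute]
      exact commute_of_piMulEquiv e he hij (hCS i hx) (hCS j hy)
    have hbot := commutator_eq_bot_of_le_center (hle.trans hM)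
    intro x y hx hy
    exact (commutator_eq_bot_iff_le_centralizer.mp hbot hx y hy).symm
  have hΦ : (mk' M).comp (noncommPiCoprod hcomm) =
      (e.toMonoidHom).comp (MulEquiv.piCongrRight θ).toMonoidHom :=
    MonoidHom.pi_ext fun i x => by
      have : MulEquiv.piCongrRight θ (Pi.mulSingle i x) = Pi.mulSingle i (θ i x) :=
        funext (Pi.apply_mulSingle (fun j => θ j) (fun j => map_one (θ j)) i x)
      simp [this, he, hθ]
  refine ⟨(noncommPiCoprod hcomm).range, ?_, ?_⟩
  · have := isComplement'_ker_range (mk' M) _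
      (by rw [hΦ]; exact e.bijective.comp (MulEquiv.piCongrRight θ).bijective)
    rwa [ker_mk'] at this
  · rw [noncommPiCoprod_range]
    exact isPerfect_iSup C

section QuotientPreimage

variable {G : Type*} [Group G] {K M : Subgroup G} [M.Normal]

/-- The subgroup `K̃` with `K̃ / M = T`. -/
def quotientPreimage (T : Subgroup (K ⧸ M.subgroupOf K)) : Subgroup G :=
  (T.comap (mk' _)).map K.subtype

variable (T : Subgroup (K ⧸ M.subgroupOf K))

theorem quotientPreimage_le : quotientPreimage T ≤ K :=
  map_subtype_le _

theorem quotientPreimage_subgroupOf : (quotientPreimage T).subgroupOf K = T.comap (mk' _) :=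
  comap_map_eq_self_of_injective K.subtype_injective _

theorem lt_quotientPreimage (hMK : M ≤ K) (hT : T ≠ ⊥) : M < quotientPreimage T := by
  have hlt : M.subgroupOf K < T.comap (mk' _) :=
    calc M.subgroupOf K = (⊥ : Subgroup (K ⧸ M.subgroupOf K)).comap (mk' _) := by
          rw [MonoidHom.comap_bot, ker_mk']
      _ < T.comap (mk' _) :=
          (comap_lt_comap_of_surjective (mk'_surjective _)).mpr (bot_lt_iff_ne_bot.mpr hT)
  conv_lhs => rw [← map_subgroupOf_eq_of_le hMK]
  exact (map_lt_map_iff_of_injective K.subtype_injective).mpr hlt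

theorem isSimpleGroup_quotient_quotientPreimage [IsSimpleGroup T] :
    IsSimpleGroup (quotientPreimage T ⧸ M.subgroupOf (quotientPreimage T)) := by
  have hmem : ∀ x : quotientPreimage T,
      mk' (M.subgroupOf K) (inclusion (quotientPreimage_le T) x) ∈ T := fun x => by
    have : inclusion (quotientPreimage_le T) x ∈ (quotientPreimage T).subgroupOf K := x.2
    rwa [quotientPreimage_subgroupOf] at this
  let ψ := ((mk' (M.subgroupOf K)).comp (inclusion (quotientPreimage_le T))).codRestrict T hmem
  have hψ : Function.Surjective ψ := by
    rintro ⟨t, ht⟩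
    obtain ⟨k, rfl⟩ := mk'_surjective _ t
    exact ⟨⟨k, k, ht, rfl⟩, rfl⟩
  have hker : ψ.ker = M.subgroupOf (quotientPreimage T) := by
    ext x
    rw [MonoidHom.mem_ker, mem_subgroupOf, ← Subtype.val_inj]
    exact QuotientGroup.eq_one_iff _
  exact ((quotientMulEquivOfEq hker).symm.trans (quotientKerEquivOfSurjective ψ hψ)).isSimpleGroup

theorem exists_inf_eq_bot_sup_eq_comap (hMK : M ≤ K) [T.Normal] [IsSimpleGroup T]
    (hcomp : ∀ L : Subgroup G, L ≤ K → M < L → (L.subgroupOf K).Normal →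
      IsSimpleGroup (L ⧸ M.subgroupOf L) →
      ∃ C : Subgroup G, C ≤ L ∧ (C.subgroupOf L).Normal ∧ M ⊓ C = ⊥ ∧ M ⊔ C = L) :
    ∃ C : Subgroup K, M.subgroupOf K ⊓ C = ⊥ ∧ M.subgroupOf K ⊔ C = T.comap (mk' _) := by
  have hnormal : ((quotientPreimage T).subgroupOf K).Normal := by
    rw [quotientPreimage_subgroupOf]
    infer_instance
  obtain ⟨C, hCL, -, hinf, hsup⟩ := hcomp _ (quotientPreimage_le T)
    (lt_quotientPreimage T hMK ((nontrivial_iff_ne_bot T).mp inferInstance)) hnormal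
    (isSimpleGroup_quotient_quotientPreimage T)
  refine ⟨C.subgroupOf K, ?_, ?_⟩
  · rw [← bot_subgroupOf, ← hinf]
    rfl
  · rw [← subgroupOf_sup hMK (hCL.trans (quotientPreimage_le T)), hsup,
      quotientPreimage_subgroupOf]

end QuotientPreimage

end Subgroup

/-- Let `M ⊴ G` be a `p`-subgroup with `M ≤ Z(K)` for a normal subgroup `M ≤ K ⊴ G`.
Suppose that for every `M < K' ⊴ K` with `K'/M` simple, `M` has a normal complement in
`K'`. If `K/M` is a direct product of non-abelian simple groups, then `M` has a normal
complement `C` in `K` with `C = O^p(K)` (the smallest normal subgroup of `K` with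
`p`-group quotient, characterized here by having `p`-power index and minimality); in
particular `C` is normal in `G`. -/
theorem stmt15 (G : Type) [Group G] [Fintype G] (p : ℕ) (hp : p.Prime)
    (K M : Subgroup G) [K.Normal] [M.Normal]
    (hMK : M ≤ K) (hMp : IsPGroup p M)
    (hcentral : ∀ m ∈ M, ∀ k ∈ K, m * k = k * m)
    (hcomp : ∀ K' : Subgroup G, K' ≤ K → M < K' → (K'.subgroupOf K).Normal →
      IsSimpleGroup (↥K' ⧸ (M.subgroupOf K')) →
      ∃ C : Subgroup G, C ≤ K' ∧ (C.subgroupOf K').Normal ∧ M ⊓ C = ⊥ ∧ M ⊔ C = K')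
    (hquot : ∃ (ι : Type) (_ : Fintype ι) (_ : DecidableEq ι) (S : ι → Subgroup (↥K ⧸ (M.subgroupOf K))),
      (∀ i, IsSimpleGroup (S i)) ∧ (∀ i, ∃ a b : (S i), a * b ≠ b * a) ∧
      ∃ e : ((i : ι) → (S i)) ≃* (↥K ⧸ (M.subgroupOf K)),
        ∀ (i : ι) (x : (S i)), e (Pi.mulSingle i x) = (x : ↥K ⧸ (M.subgroupOf K))) :
    ∃ C : Subgroup G, C ≤ K ∧ (C.subgroupOf K).Normal ∧ C.Normal ∧
      M ⊓ C = ⊥ ∧ M ⊔ C = K ∧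
      (∃ k : ℕ, (C.subgroupOf K).index = p ^ k) ∧
      (∀ N : Subgroup G, N ≤ K → (N.subgroupOf K).Normal →
        (∃ k : ℕ, (N.subgroupOf K).index = p ^ k) → C ≤ N) := by
  have : Fact p.Prime := ⟨hp⟩
  obtain ⟨ι, _, _, S, hS, hSnc, e, he⟩ := hquot
  have hMcenter : M.subgroupOf K ≤ center K := fun m hm =>
    mem_center_iff.mpr fun k => Subtype.ext (hcentral m hm k k.2).symm
  have hSperfect : ∀ i, IsPerfect (S i) := fun i => Group.isPerfect_of_isSimpleGroup (hSnc i)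
  have hSnormal : ∀ i, (S i).Normal := normal_of_piMulEquiv e he
  choose C hCinf hCsup using fun i => exists_inf_eq_bot_sup_eq_comap (S i) hMK hcomp
  obtain ⟨D, hcompl, hD⟩ :=
    exists_isComplement'_isPerfect_of_piMulEquiv hMcenter e he C hCinf hCsup
  obtain rfl := commutator_eq_of_sup_eq_top hMcenter hcompl.sup_eq_top
  have hCK : ⁅K, K⁆.subgroupOf K = _root_.commutator K := by
    rw [← map_subtype_commutator]
    exact comap_map_eq_self_of_injective K.subtype_injective _
  refine ⟨⁅K, K⁆, commutator_le_self K, normal_subgroupOf, inferInstance, ?_, ?_, ?_, ?_⟩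
  · rw [← map_subgroupOf_eq_of_le hMK, ← map_subtype_commutator,
      ← map_inf_eq _ _ _ K.subtype_injective, hcompl.disjoint.eq_bot, Subgroup.map_bot]
  · rw [← map_subgroupOf_eq_of_le hMK, ← map_subtype_commutator, ← Subgroup.map_sup,
      hcompl.sup_eq_top, ← MonoidHom.range_eq_map, range_subtype]
  · rw [hCK, hcompl.index_eq_card]
    exact IsPGroup.iff_card.mp (hMp.of_equiv (subgroupOfEquivOfLe hMK).symm)
  · rintro N hNK hN ⟨k, hk⟩
    have hQ : IsPGroup p (K ⧸ N.subgroupOf K) :=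
      IsPGroup.of_card (by rw [← index_eq_card]; exact hk)
    rw [← map_subtype_commutator, ← map_subgroupOf_eq_of_le hNK]
    exact map_mono (le_of_isPerfect_of_isPGroup_quotient hQ _)
end
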